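/- Let ℐ ⊆ ℕ be finite and nonempty, let τ ∈ ∏_{i∈ℐ}[2^i], and let A = [τ] = {f ∈ 𝒯 : ∀ i ∈ ℐ, f(i) = τ(i)}. Then every (ℐ, τ, N)-rectangle covers A, i.e. A is contained in the union of its members. -/

import Mathlib

noncomputable section

/-- 𝒯 = ∏_{n∈ℕ} [2^n]  (the paper's index `n ∈ {1,2,…}` is the Lean index `n+1`). -/
abbrev Tal : Type := (n : ℕ) → Fin (2 ^ (n + 1))

/-- `S_{n,τ} = {f ∈ 𝒯 : f(n) ≠ τ}`. -/
def Sset (n : ℕ) (τ : Fin (2 ^ (n + 1))) : Set Tal := {f | f n ≠ τ}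

/-- The 𝒟-set `⋂_{n ∈ I} S_{n, t n}` with (nonempty, finite) index set `I`;
only the values of `t` on `I` matter. -/
def DSet (I : Finset ℕ) (t : (n : ℕ) → Fin (2 ^ (n + 1))) : Set Tal :=
  {f | ∀ n ∈ I, f n ≠ t n}

/-- `η(k) = 2^{2500 k⁴}`. -/
def ηT (k : ℕ) : ℕ := 2 ^ (2500 * k ^ 4)

/-- `α(k) = (k+5)^{-3}`. -/
def αT (k : ℕ) : ℝ := (((k : ℝ) + 5) ^ 3)⁻¹

/-- `δ(m) = min {n ∈ ℕ : η(n) ≥ m}` (with `ℕ = {1,2,…}`). -/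
def δT (m : ℕ) : ℕ := sInf {n : ℕ | 1 ≤ n ∧ m ≤ ηT n}

/-- `w(n) = 2^{-δ(n)} (η(δ(n))/n)^{α(δ(n))}`. -/
def wT (n : ℕ) : ℝ :=
  (2 : ℝ) ^ (-(δT n : ℤ)) * ((ηT (δT n) : ℝ) / (n : ℝ)) ^ (αT (δT n))

/-- Membership in Talagrand's family 𝒟 for a triple `(X, I, w)`:  for some `k ∈ {1,2,…}`,
`X` is a 𝒟-set with index set `I`, `1 ≤ |I| ≤ η(k)`, and `w = 2^{-k}(η(k)/|I|)^{α(k)}`. -/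
def memD (p : Set Tal × Finset ℕ × ℝ) : Prop :=
  ∃ k : ℕ, 1 ≤ k ∧ (∃ t : (n : ℕ) → Fin (2 ^ (n + 1)), p.1 = DSet p.2.1 t) ∧
    p.2.1.Nonempty ∧ p.2.1.card ≤ ηT k ∧
    p.2.2 = (2 : ℝ) ^ (-(k : ℤ)) * ((ηT k : ℝ) / (p.2.1.card : ℝ)) ^ (αT k)

/-- Talagrand's first pathological submeasure:
`ψ(B) = inf { w(Y) : Y ⊆ 𝒟 finite, B ⊆ ⋃ Y }`. -/
def ψT (B : Set Tal) : ℝ :=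
  sInf {r : ℝ | ∃ Y : Finset (Set Tal × Finset ℕ × ℝ), (∀ p ∈ Y, memD p) ∧
    B ⊆ (⋃ p ∈ Y, p.1) ∧ r = ∑ p ∈ Y, p.2.2}

end

/-!
For `f ∈ [τ]` every member of the rectangle already avoids `f` on `ℐ`, so only the common index
set `L = X_i^Ind ∖ ℐ` of size `N - 1` matters. Since the values `t_i(l)` are pairwise distinct,
each `l ∈ L` can witness `f(l) = t_i(l)` for at most one `i`; by pigeonhole some `i` among the
`N` is witnessed by no `l`, and then `f ∈ X_i`.
-/

open Finset

theorem Finset.exists_forall_ne_of_card_lt {ι α : Type*} {β : α → Type*} [Fintype ι]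
    (L : Finset α) (t : ι → (a : α) → β a) (hdiff : ∀ i j, i ≠ j → ∀ l ∈ L, t i l ≠ t j l)
    (hcard : #L < Fintype.card ι) (f : (a : α) → β a) :
    ∃ i, ∀ l ∈ L, f l ≠ t i l := by
  classical
  set hit := L.biUnion fun l => univ.filter fun i => f l = t i l
  have hhit : #hit ≤ #L := by
    simpa using card_biUnion_le_card_mul L _ 1 fun l hl => card_le_one.mpr fun i hi j hj => by
      by_contra hij
      exact hdiff i j hij l hl ((mem_filter.mp hi).2.symm.trans (mem_filter.mp hj).2)
  obtain ⟨i, -, hi⟩ := exists_mem_notMem_of_card_lt_card (s := hit) (t := univ)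
    (by simpa using hhit.trans_lt hcard)
  exact ⟨i, fun l hl hfl => hi (mem_biUnion.mpr ⟨l, hl, mem_filter.mpr ⟨mem_univ i, hfl⟩⟩)⟩

theorem iUnion_DSet_eq_univ {N : ℕ} (L : Finset ℕ) (t : Fin N → (n : ℕ) → Fin (2 ^ (n + 1)))
    (hdiff : ∀ i j, i ≠ j → ∀ l ∈ L, t i l ≠ t j l) (hcard : #L < N) :
    ⋃ i, DSet L (t i) = Set.univ :=
  Set.eq_univ_of_forall fun f =>
    let ⟨i, hi⟩ := L.exists_forall_ne_of_card_lt t hdiff (by rwa [Fintype.card_fin]) f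
    Set.mem_iUnion.mpr ⟨i, hi⟩

theorem statement10_general (ℐ : Finset ℕ)
    (τ : (n : ℕ) → Fin (2 ^ (n + 1)))
    (N : ℕ) (hN : 2 ≤ N)
    (Ind : Fin N → Finset ℕ) (t : Fin N → (n : ℕ) → Fin (2 ^ (n + 1)))
    (hcommon : ∀ i j, Ind i \ ℐ = Ind j \ ℐ)
    (hcard : ∀ i, (Ind i \ ℐ).card = N - 1)
    (hdiff : ∀ i j : Fin N, i ≠ j → ∀ m ∈ Ind i \ ℐ, t i m ≠ t j m)
    (havoid : ∀ i, ∀ j ∈ ℐ, t i j ≠ τ j) :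
    {f : Tal | ∀ i ∈ ℐ, f i = τ i} ⊆ ⋃ i : Fin N, DSet (Ind i) (t i) := by
  intro f hf
  let i₀ : Fin N := ⟨0, by omega⟩
  have hL : ∀ i, Ind i \ ℐ = Ind i₀ \ ℐ := fun i => hcommon i i₀
  have hcover := iUnion_DSet_eq_univ (Ind i₀ \ ℐ) t
    (fun i j hij => hL i ▸ hdiff i j hij) (by rw [hcard]; omega)
  obtain ⟨i, hi⟩ := Set.mem_iUnion.mp (hcover ▸ Set.mem_univ f)
  refine Set.mem_iUnion.mpr ⟨i, fun n hn => ?_⟩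
  by_cases hnℐ : n ∈ ℐ
  · exact hf n hnℐ ▸ (havoid i n hnℐ).symm
  · exact hi n (hL i ▸ mem_sdiff.mpr ⟨hn, hnℐ⟩)

/-- Every `(ℐ, τ, N)`-rectangle covers `A = [τ]`:  a family of 𝒟-sets
`X i = DSet (Ind i) (t i)` (for `i < N`) with `ℐ ⊊ Ind i`, whose derived family
`⋂_{l ∈ Ind i ∖ ℐ} S_{l, tᵢ(l)}` is an `N`-rectangle, and whose defining values avoid `τ`
on `ℐ`, covers `{f ∈ 𝒯 : ∀ i ∈ ℐ, f i = τ i}`. -/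
theorem statement10 (ℐ : Finset ℕ) (hℐ : ℐ.Nonempty)
    (τ : (n : ℕ) → Fin (2 ^ (n + 1)))
    (N : ℕ) (hN : 2 ≤ N)
    (Ind : Fin N → Finset ℕ) (t : Fin N → (n : ℕ) → Fin (2 ^ (n + 1)))
    (hsub : ∀ i, ℐ ⊂ Ind i)
    (hcommon : ∀ i j, Ind i \ ℐ = Ind j \ ℐ)
    (hcard : ∀ i, (Ind i \ ℐ).card = N - 1)
    (hdiff : ∀ i j : Fin N, i ≠ j → ∀ m ∈ Ind i \ ℐ, t i m ≠ t j m)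
    (hdistinct : Function.Injective (fun i : Fin N => DSet (Ind i \ ℐ) (t i)))
    (havoid : ∀ i, ∀ j ∈ ℐ, t i j ≠ τ j) :
    {f : Tal | ∀ i ∈ ℐ, f i = τ i} ⊆ ⋃ i : Fin N, DSet (Ind i) (t i) :=
  statement10_general ℐ τ N hN Ind t hcommon hcard hdiff havoid
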